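/- Under the union-bound setup: let K ≥ 2, T ≥ K, p ∈ (0,2], and suppose for each arm i ∈ [K] and round r ∈ [K−1] an event E_{i,r} has probability at most 2 exp(−2 n_r (Δ_{(K+1−r)}/4)²), where n_r = ⌈(T−K)/(C_p (K−r+1)^p)⌉. Then the probability of the union of all K(K−1) events is at most 2 K² exp(−(T−K)/(8 C_p H(p))). -/

import Mathlib

open Finset MeasureTheory

/-! Every round-`r` bound has exponent `n_r Δ² / 8` with `Δ = Δ_{(K+1-r)}`, and
`n_r ≥ (T - K) / (C_p (K+1-r)^p) ≥ (T - K) / (C_p H(p) Δ²)` because `(K+1-r)^p / Δ² ≤ H(p)`;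
so each of the `K (K-1) ≤ K²` events has probability at most `2 exp (-(T-K) / (8 C_p H(p)))`,
and the union bound finishes. -/

theorem measure_biUnion_biUnion_le {Ω ι κ : Type*} [MeasurableSpace Ω] (μ : Measure Ω)
    (s : Finset ι) (t : Finset κ) (E : ι → κ → Set Ω) (b : ENNReal)
    (h : ∀ i ∈ s, ∀ j ∈ t, μ (E i j) ≤ b) :
    μ (⋃ i ∈ s, ⋃ j ∈ t, E i j) ≤ #s * #t * b :=
  calc μ (⋃ i ∈ s, ⋃ j ∈ t, E i j) ≤ ∑ i ∈ s, ∑ j ∈ t, μ (E i j) :=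
        (measure_biUnion_finset_le _ _).trans <| sum_le_sum fun _ _ => measure_biUnion_finset_le _ _
    _ ≤ ∑ _i ∈ s, ∑ _j ∈ t, b := sum_le_sum fun i hi => sum_le_sum fun j hj => h i hi j hj
    _ = #s * #t * b := by simp only [sum_const, nsmul_eq_mul]; ring

theorem neg_two_mul_ceil_mul_sq_le {x C w δ H : ℝ} (hC : 0 < C) (hw : 0 < w) (hδ : 0 < δ)
    (hH : w / δ ^ 2 ≤ H) :
    -2 * ⌈x / (C * w)⌉₊ * (δ / 4) ^ 2 ≤ -x / (8 * C * H) := by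
  set n : ℝ := (⌈x / (C * w)⌉₊ : ℝ)
  have hH0 : 0 < H := (div_pos hw (pow_pos hδ 2)).trans_le hH
  have hw_le : w ≤ H * δ ^ 2 := (div_le_iff₀ (pow_pos hδ 2)).mp hH
  have hx_le : x ≤ n * (C * w) := (div_le_iff₀ (by positivity)).mp (Nat.le_ceil _)
  rw [neg_div, neg_mul, neg_mul, neg_le_neg_iff, div_le_iff₀ (by positivity)]
  calc x ≤ n * (C * (H * δ ^ 2)) := hx_le.trans (by gcongr)
    _ = 2 * n * (δ / 4) ^ 2 * (8 * C * H) := by ring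

theorem union_bound_nsar_general
    {Ω : Type*} [MeasurableSpace Ω] (μ : Measure Ω) [IsProbabilityMeasure μ]
    (K T : ℕ) (hK : 2 ≤ K)
    (p : ℝ) (Δ : ℕ → ℝ)
    (hpos : ∀ i ∈ Finset.Icc 2 K, 0 < Δ i)
    (E : ℕ → ℕ → Set Ω)
    (hprob : ∀ i ∈ Finset.Icc 1 K, ∀ r ∈ Finset.Icc 1 (K - 1),
      μ (E i r) ≤ ENNReal.ofReal (2 * Real.exp (-2 *
        (Nat.ceil (((T : ℝ) - K) /
          (((2 : ℝ) ^ (-p) + ∑ s ∈ Finset.Icc 2 K, (s : ℝ) ^ (-p)) *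
            ((K - r + 1 : ℕ) : ℝ) ^ p)) : ℝ) *
        (Δ (K + 1 - r) / 4) ^ 2))) :
    μ (⋃ i ∈ Finset.Icc 1 K, ⋃ r ∈ Finset.Icc 1 (K - 1), E i r) ≤
      ENNReal.ofReal (2 * (K : ℝ) ^ 2 * Real.exp (-((T : ℝ) - K) /
        (8 * ((2 : ℝ) ^ (-p) + ∑ s ∈ Finset.Icc 2 K, (s : ℝ) ^ (-p)) *
          (Finset.Icc 2 K).sup' (Finset.nonempty_Icc.mpr hK)
            (fun i => (i : ℝ) ^ p / (Δ i) ^ 2)))) := by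
  set C : ℝ := (2 : ℝ) ^ (-p) + ∑ s ∈ Icc 2 K, (s : ℝ) ^ (-p)
  set H : ℝ := (Icc 2 K).sup' (nonempty_Icc.mpr hK) fun i => (i : ℝ) ^ p / Δ i ^ 2
  set b : ℝ := 2 * Real.exp (-((T : ℝ) - K) / (8 * C * H)) with hb
  have hC : 0 < C := add_pos_of_pos_of_nonneg (by positivity) (sum_nonneg fun _ _ => by positivity)
  have hterm : ∀ i ∈ Icc 1 K, ∀ r ∈ Icc 1 (K - 1), μ (E i r) ≤ ENNReal.ofReal b := by
    intro i hi r hr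
    have hr' := mem_Icc.mp hr
    have hj : K + 1 - r ∈ Icc 2 K := mem_Icc.mpr (by omega)
    have hcast : ((K - r + 1 : ℕ) : ℝ) = ((K + 1 - r : ℕ) : ℝ) := by congr 1; omega
    refine (hprob i hi r hr).trans (ENNReal.ofReal_le_ofReal ?_)
    rw [hcast, hb]
    gcongr
    exact neg_two_mul_ceil_mul_sq_le hC
      (Real.rpow_pos_of_pos (by exact_mod_cast (by omega : 0 < K + 1 - r)) p) (hpos _ hj)
      (le_sup' (fun i : ℕ => (i : ℝ) ^ p / Δ i ^ 2) hj)
  have hcard : ((#(Icc 1 K) * #(Icc 1 (K - 1)) : ℕ) : ℝ) ≤ (K : ℝ) ^ 2 := by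
    simp only [Nat.card_Icc, add_tsub_cancel_right, sq]
    exact_mod_cast Nat.mul_le_mul_left K (Nat.sub_le K 1)
  calc μ (⋃ i ∈ Icc 1 K, ⋃ r ∈ Icc 1 (K - 1), E i r)
      ≤ #(Icc 1 K) * #(Icc 1 (K - 1)) * ENNReal.ofReal b := measure_biUnion_biUnion_le μ _ _ E _ hterm
    _ ≤ ENNReal.ofReal ((K : ℝ) ^ 2) * ENNReal.ofReal b := by
        gcongr
        rw [← Nat.cast_mul, ← ENNReal.ofReal_natCast]
        exact ENNReal.ofReal_le_ofReal hcard
    _ = _ := by rw [← ENNReal.ofReal_mul (by positivity), hb]; congr 1; ring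

theorem union_bound_nsar
    {Ω : Type*} [MeasurableSpace Ω] (μ : Measure Ω) [IsProbabilityMeasure μ]
    (K T : ℕ) (hK : 2 ≤ K) (hT : K ≤ T)
    (p : ℝ) (hp0 : 0 < p) (hp2 : p ≤ 2) (Δ : ℕ → ℝ)
    (hpos : ∀ i ∈ Finset.Icc 2 K, 0 < Δ i)
    (hmono : ∀ i ∈ Finset.Icc 2 K, ∀ j ∈ Finset.Icc 2 K, i ≤ j → Δ i ≤ Δ j)
    (E : ℕ → ℕ → Set Ω)
    (hprob : ∀ i ∈ Finset.Icc 1 K, ∀ r ∈ Finset.Icc 1 (K - 1),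
      μ (E i r) ≤ ENNReal.ofReal (2 * Real.exp (-2 *
        (Nat.ceil (((T : ℝ) - K) /
          (((2 : ℝ) ^ (-p) + ∑ s ∈ Finset.Icc 2 K, (s : ℝ) ^ (-p)) *
            ((K - r + 1 : ℕ) : ℝ) ^ p)) : ℝ) *
        (Δ (K + 1 - r) / 4) ^ 2))) :
    μ (⋃ i ∈ Finset.Icc 1 K, ⋃ r ∈ Finset.Icc 1 (K - 1), E i r) ≤
      ENNReal.ofReal (2 * (K : ℝ) ^ 2 * Real.exp (-((T : ℝ) - K) /
        (8 * ((2 : ℝ) ^ (-p) + ∑ s ∈ Finset.Icc 2 K, (s : ℝ) ^ (-p)) *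
          (Finset.Icc 2 K).sup' (Finset.nonempty_Icc.mpr hK)
            (fun i => (i : ℝ) ^ p / (Δ i) ^ 2)))) :=
  union_bound_nsar_general μ K T hK p Δ hpos E hprob
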